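/- arXiv:1512.05144 — 4 statements merged into one kernel-verified Lean document; each statement's English description precedes it below -/
import Mathlib

section
/- Let f : ℂ → ℂ be a nonconstant entire function, let U ⊆ ℂ be open, and let φ : ℂ → [0,∞) be a measurable function. Then ∫_{f(U)} φ(w) dA(w) ≤ ∫_U φ(f(z)) · |f'(z)|² dA(z), where dA is planar Lebesgue measure (in particular f(U) is open, hence measurable). -/
/-!
Away from the critical set `{f' = 0}` the inverse function theorem makes `f` locally injective,
so by second countability that part of `U` is a countable union of measurable pieces on each of
which `f` is injective. After disjointifying the pieces, the change of variables formula on each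
piece and subadditivity on the image side give the inequality; it is strict where points of
`f '' U` have several preimages, since they are counted once on the left. The image of the
critical set is null by Sard's lemma, and the real Jacobian of a holomorphic map is `|f'|²`.
-/

open MeasureTheory Set Topology

theorem exists_seq_isOpen_injOn_cover {X Y : Type*} [TopologicalSpace X]
    [SecondCountableTopology X] (f : X → Y) {t : Set X}
    (h : ∀ x ∈ t, ∃ V ∈ 𝓝 x, InjOn f V) :
    ∃ W : ℕ → Set X, (∀ n, IsOpen (W n)) ∧ (∀ n, InjOn f (W n)) ∧ t ⊆ ⋃ n, W n := by
  obtain ⟨T, hTc, hTS, hT⟩ :=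
    TopologicalSpace.isOpen_sUnion_countable {V | IsOpen V ∧ InjOn f V} fun _ hV => hV.1
  obtain ⟨W, hW⟩ := (hTc.insert ∅).exists_eq_range (insert_nonempty _ _)
  have hWT : ∀ n, W n = ∅ ∨ W n ∈ T := fun n => by
    rw [← mem_insert_iff, hW]; exact mem_range_self n
  refine ⟨W, fun n => ?_, fun n => ?_, fun x hx => ?_⟩
  · rcases hWT n with h | h
    · exact h ▸ isOpen_empty
    · exact (hTS h).1
  · rcases hWT n with h | h
    · exact h ▸ injOn_empty f
    · exact (hTS h).2
  · obtain ⟨V, hV, hfV⟩ := h x hx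
    have hxS : x ∈ ⋃₀ {V | IsOpen V ∧ InjOn f V} :=
      ⟨interior V, ⟨isOpen_interior, hfV.mono interior_subset⟩, mem_interior_iff_mem_nhds.2 hV⟩
    obtain ⟨U, hUT, hxU⟩ := hT ▸ hxS
    obtain ⟨n, rfl⟩ : U ∈ range W := hW ▸ mem_insert_of_mem ∅ hUT
    exact mem_iUnion.2 ⟨n, hxU⟩

theorem HasStrictFDerivAt.exists_mem_nhds_injOn {𝕜 E F : Type*} [NontriviallyNormedField 𝕜]
    [NormedAddCommGroup E] [NormedSpace 𝕜 E] [CompleteSpace E] [NormedAddCommGroup F]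
    [NormedSpace 𝕜 F] {f : E → F} {f' : E ≃L[𝕜] F} {a : E}
    (hf : HasStrictFDerivAt f (f' : E →L[𝕜] F) a) : ∃ V ∈ 𝓝 a, InjOn f V :=
  ⟨_, (hf.toOpenPartialHomeomorph f).open_source.mem_nhds hf.mem_toOpenPartialHomeomorph_source,
    by simpa only [hf.toOpenPartialHomeomorph_coe] using (hf.toOpenPartialHomeomorph f).injOn⟩

section ChangeOfVariables

variable {E : Type*} [NormedAddCommGroup E] [NormedSpace ℝ E] [FiniteDimensional ℝ E]
  [MeasurableSpace E] [BorelSpace E] (μ : Measure E) [μ.IsAddHaarMeasure]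
  {f : E → E} {f' : E → E →L[ℝ] E}

theorem lintegral_image_iUnion_le_of_injOn {s : ℕ → Set E} (hs : ∀ n, MeasurableSet (s n))
    (hf' : ∀ x ∈ ⋃ n, s n, HasFDerivWithinAt f (f' x) (⋃ n, s n) x)
    (hf : ∀ n, InjOn f (s n)) (g : E → ENNReal) :
    ∫⁻ x in f '' ⋃ n, s n, g x ∂μ ≤
      ∫⁻ x in ⋃ n, s n, ENNReal.ofReal |(f' x).det| * g (f x) ∂μ := by
  have hsub : ∀ n, disjointed s n ⊆ ⋃ n, s n := fun n =>
    (disjointed_subset s n).trans (subset_iUnion s n)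
  calc ∫⁻ x in f '' ⋃ n, s n, g x ∂μ = ∫⁻ x in ⋃ n, f '' disjointed s n, g x ∂μ := by
        rw [← image_iUnion, iUnion_disjointed]
    _ ≤ ∑' n, ∫⁻ x in f '' disjointed s n, g x ∂μ := lintegral_iUnion_le _ _
    _ = ∑' n, ∫⁻ x in disjointed s n, ENNReal.ofReal |(f' x).det| * g (f x) ∂μ :=
        tsum_congr fun n => lintegral_image_eq_lintegral_abs_det_fderiv_mul μ
          (MeasurableSet.disjointed hs n) (fun x hx => (hf' x (hsub n hx)).mono (hsub n))
          ((hf n).mono (disjointed_subset s n)) g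
    _ = ∫⁻ x in ⋃ n, s n, ENNReal.ofReal |(f' x).det| * g (f x) ∂μ := by
        rw [← lintegral_iUnion (MeasurableSet.disjointed hs) (disjoint_disjointed s),
          iUnion_disjointed]

theorem lintegral_image_le_lintegral_abs_det_fderiv_mul {s : Set E} (hs : MeasurableSet s)
    (hf' : ∀ x ∈ s, HasStrictFDerivAt f (f' x) x) (g : E → ENNReal) :
    ∫⁻ x in f '' s, g x ∂μ ≤ ∫⁻ x in s, ENNReal.ofReal |(f' x).det| * g (f x) ∂μ := by
  set Z := {x ∈ s | (f' x).det = 0}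
  have hZ : μ (f '' Z) = 0 := addHaar_image_eq_zero_of_det_fderivWithin_eq_zero μ
    (fun x hx => (hf' x hx.1).hasFDerivAt.hasFDerivWithinAt) fun x hx => hx.2
  obtain ⟨W, hWo, hWinj, hW⟩ := exists_seq_isOpen_injOn_cover f (t := s \ Z) fun x hx => by
    have hdet : (f' x).det ≠ 0 := fun h => hx.2 ⟨hx.1, h⟩
    have hfx : HasStrictFDerivAt f
        ((f' x).toContinuousLinearEquivOfDetNeZero hdet : E →L[ℝ] E) x := by
      rw [ContinuousLinearMap.coe_toContinuousLinearEquivOfDetNeZero]; exact hf' x hx.1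
    exact hfx.exists_mem_nhds_injOn
  have hcover : s \ Z ⊆ ⋃ n, s ∩ W n := by
    rw [← inter_iUnion]; exact subset_inter sdiff_subset hW
  have hcover_sub : ⋃ n, s ∩ W n ⊆ s := iUnion_subset fun _ => inter_subset_left
  calc ∫⁻ x in f '' s, g x ∂μ ≤ ∫⁻ x in f '' Z ∪ f '' (⋃ n, s ∩ W n), g x ∂μ := by
        refine lintegral_mono_set ?_
        rw [← image_union]
        exact image_mono fun x hx => (em (x ∈ Z)).imp id fun h => hcover ⟨hx, h⟩
    _ ≤ ∫⁻ x in f '' Z, g x ∂μ + ∫⁻ x in f '' (⋃ n, s ∩ W n), g x ∂μ := lintegral_union_le _ _ _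
    _ = ∫⁻ x in f '' (⋃ n, s ∩ W n), g x ∂μ := by rw [setLIntegral_measure_zero _ _ hZ, zero_add]
    _ ≤ ∫⁻ x in ⋃ n, s ∩ W n, ENNReal.ofReal |(f' x).det| * g (f x) ∂μ :=
        lintegral_image_iUnion_le_of_injOn μ (fun n => hs.inter (hWo n).measurableSet)
          (fun x hx => (hf' x (hcover_sub hx)).hasFDerivAt.hasFDerivWithinAt)
          (fun n => (hWinj n).mono inter_subset_right) g
    _ ≤ ∫⁻ x in s, ENNReal.ofReal |(f' x).det| * g (f x) ∂μ := lintegral_mono_set hcover_sub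

end ChangeOfVariables

theorem Complex.det_restrictScalars_smulRight_one (a : ℂ) :
    ((ContinuousLinearMap.smulRight (1 : ℂ →L[ℂ] ℂ) a).restrictScalars ℝ).det = ‖a‖ ^ 2 := by
  simp [ContinuousLinearMap.det, LinearMap.det_restrictScalars, Algebra.norm_complex_eq,
    Complex.normSq_eq_norm_sq]

theorem stmt_1_general (f : ℂ → ℂ) (hf : Differentiable ℂ f)
    (U : Set ℂ) (hU : IsOpen U) (φ : ℂ → ENNReal) :
    ∫⁻ w in f '' U, φ w ≤ ∫⁻ z in U, φ (f z) * ENNReal.ofReal (‖deriv f z‖ ^ 2) := by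
  have hf' : ∀ z ∈ U, HasStrictFDerivAt f
      ((ContinuousLinearMap.smulRight (1 : ℂ →L[ℂ] ℂ) (deriv f z)).restrictScalars ℝ) z :=
    fun z _ => ((hf.analyticAt z).hasStrictDerivAt.hasStrictFDerivAt).restrictScalars ℝ
  refine (lintegral_image_le_lintegral_abs_det_fderiv_mul volume hU.measurableSet hf' φ).trans_eq ?_
  simp only [Complex.det_restrictScalars_smulRight_one, abs_pow, abs_norm, mul_comm]

theorem stmt_1 (f : ℂ → ℂ) (hf : Differentiable ℂ f)
    (hnc : ¬ ∃ c : ℂ, f = Function.const ℂ c)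
    (U : Set ℂ) (hU : IsOpen U) (φ : ℂ → ENNReal) (hφ : Measurable φ) :
    ∫⁻ w in f '' U, φ w ≤ ∫⁻ z in U, φ (f z) * ENNReal.ofReal (‖deriv f z‖ ^ 2) :=
  stmt_1_general f hf U hU φ
end

section
/- Let f(z) = exp(z) be the complex exponential. For every x ∈ ℝ and every r > 0, (1/n) · log S(f^n, D(x,r)) → +∞ as n → ∞. -/
open MeasureTheory Filter

/-- The spherical area `S(f, U) = (1/π) ∫_U |f'|²/(1+|f|²)² dA`. -/
noncomputable def sphArea (f : ℂ → ℂ) (U : Set ℂ) : ℝ :=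
  (1 / Real.pi) * ∫ z in U, ‖deriv f z‖ ^ 2 / (1 + ‖f z‖ ^ 2) ^ 2

/-! The spherical area pulls back under `exp`: where `exp` is injective,
`S(g ∘ exp, Q) = S(g, exp '' Q)`. Starting from a small box `(x, x + h) × (-h, h)` inside the
disc, `exp` maps each box `(a, a + h) × (-h, h)` over the box `(e^a, e^a + H) × (-H, H)` with
`H = min (e^a h / 2) π`, so `S(exp^[n], D) ≥ S(exp^[2], Q)` for the `(n - 2)`-th box `Q`.
The left ends of the boxes grow like iterated exponentials and their heights reach `π`; a box
of height `π` at abscissa `α` is mapped by `exp` over the rectangle `(-1, 1) × (e^α, 2e^α)`,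
on which the spherical density of `exp` is at least `1/900`.
Hence `log S(exp^[n], D) ≥ e^(n + x - 3) - O(1)`. -/

open Set Real Bornology

namespace SphericalArea

noncomputable def sphDensity (g : ℂ → ℂ) (z : ℂ) : ℝ :=
  ‖deriv g z‖ ^ 2 / (1 + ‖g z‖ ^ 2) ^ 2

lemma sphArea_eq_integral_sphDensity (g : ℂ → ℂ) (s : Set ℂ) :
    sphArea g s = (∫ z in s, sphDensity g z) / π := by
  rw [sphArea, one_div_mul_eq_div]; rfl

lemma sphDensity_nonneg (g : ℂ → ℂ) (z : ℂ) : 0 ≤ sphDensity g z := by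
  unfold sphDensity; positivity

lemma _root_.Differentiable.continuous_sphDensity {g : ℂ → ℂ} (hg : Differentiable ℂ g) :
    Continuous (sphDensity g) :=
  (hg.contDiff.continuous_deriv le_top).norm.pow 2 |>.div
    ((continuous_const.add (hg.continuous.norm.pow 2)).pow 2) fun z => by positivity

lemma _root_.Differentiable.integrableOn_sphDensity {g : ℂ → ℂ} (hg : Differentiable ℂ g)
    {s : Set ℂ} (hs : IsBounded s) : IntegrableOn (sphDensity g) s :=
  (hg.continuous_sphDensity.continuousOn.integrableOn_compact hs.isCompact_closure).mono_set
    subset_closure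

lemma sphArea_mono {g : ℂ → ℂ} (hg : Differentiable ℂ g) {s t : Set ℂ} (hst : s ⊆ t)
    (ht : IsBounded t) : sphArea g s ≤ sphArea g t := by
  simp only [sphArea_eq_integral_sphDensity]
  refine div_le_div_of_nonneg_right ?_ pi_pos.le
  exact setIntegral_mono_set (hg.integrableOn_sphDensity ht)
    (.of_forall (sphDensity_nonneg g)) hst.eventuallyLE

lemma le_sphArea_of_le_sphDensity {g : ℂ → ℂ} (hg : Differentiable ℂ g) {s : Set ℂ}
    (hs : MeasurableSet s) (hsb : IsBounded s) {c : ℝ} (hc : ∀ z ∈ s, c ≤ sphDensity g z) :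
    c * volume.real s / π ≤ sphArea g s := by
  rw [sphArea_eq_integral_sphDensity, mul_comm, ← smul_eq_mul]
  gcongr
  exact setIntegral_ge_of_const_le hs hsb.measure_lt_top.ne hc (hg.integrableOn_sphDensity hsb)

lemma abs_det_restrictScalars_toSpanSingleton (c : ℂ) :
    |((ContinuousLinearMap.toSpanSingleton ℂ c).restrictScalars ℝ).det| = ‖c‖ ^ 2 := by
  have : ((ContinuousLinearMap.toSpanSingleton ℂ c).restrictScalars ℝ).det
      = LinearMap.det (Algebra.lmul ℝ ℂ c) := by
    apply congrArg LinearMap.det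
    ext w
    simp [mul_comm]
  rw [this, ← Algebra.norm_apply, Algebra.norm_complex_apply, Complex.normSq_eq_norm_sq,
    abs_of_nonneg (by positivity)]

lemma sphArea_comp {f g : ℂ → ℂ} (hf : Differentiable ℂ f) (hg : Differentiable ℂ g)
    {s : Set ℂ} (hs : MeasurableSet s) (hinj : InjOn f s) :
    sphArea (g ∘ f) s = sphArea g (f '' s) := by
  simp only [sphArea_eq_integral_sphDensity]
  rw [integral_image_eq_integral_abs_det_fderiv_smul volume hs
    (fun z _ => ((hf z).hasDerivAt.hasFDerivAt.restrictScalars ℝ).hasFDerivWithinAt) hinj]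
  congr 2 with z
  rw [abs_det_restrictScalars_toSpanSingleton, smul_eq_mul, sphDensity, sphDensity,
    deriv_comp z (hg _) (hf _), Function.comp_apply, norm_mul, mul_pow]
  ring

lemma _root_.MeasurableSet.reProdIm {s t : Set ℝ} (hs : MeasurableSet s) (ht : MeasurableSet t) :
    MeasurableSet (s ×ℂ t) :=
  (Complex.measurable_re hs).inter (Complex.measurable_im ht)

lemma volume_reProdIm (s t : Set ℝ) : volume (s ×ℂ t) = volume s * volume t := by
  rw [← Complex.preimage_equivRealProd_prod, ← Measure.prod_prod, ← Measure.volume_eq_prod]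
  exact Complex.volume_preserving_equiv_real_prod.measure_preimage_equiv (s ×ˢ t)

lemma injOn_exp_reProdIm_of_subset_Ioc {s t : Set ℝ} (ht : t ⊆ Ioc (-π) π) :
    InjOn Complex.exp (s ×ℂ t) :=
  LeftInvOn.injOn (f₁' := Complex.log) fun _ hz => Complex.log_exp (ht hz.2).1 (ht hz.2).2

def box (p : ℝ × ℝ) : Set ℂ := Ioo p.1 (p.1 + p.2) ×ℂ Ioo (-p.2) p.2

lemma measurableSet_box (p : ℝ × ℝ) : MeasurableSet (box p) :=
  measurableSet_Ioo.reProdIm measurableSet_Ioo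

lemma isBounded_box (p : ℝ × ℝ) : IsBounded (box p) :=
  Metric.isBounded_Ioo _ _ |>.reProdIm (Metric.isBounded_Ioo _ _)

lemma injOn_exp_box {p : ℝ × ℝ} (hp : p.2 ≤ π) : InjOn Complex.exp (box p) :=
  injOn_exp_reProdIm_of_subset_Ioc fun _ hy => ⟨by linarith [hy.1], by linarith [hy.2]⟩

lemma mem_exp_image_box {a h : ℝ} {w : ℂ} (ha : rexp a < ‖w‖) (hb : ‖w‖ < rexp (a + h))
    (harg : |Complex.arg w| < h) : w ∈ Complex.exp '' box (a, h) := by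
  have hw : 0 < ‖w‖ := (exp_pos a).trans ha
  refine ⟨Complex.log w, ⟨?_, ?_⟩, Complex.exp_log (norm_pos_iff.mp hw)⟩
  · rw [mem_preimage, Complex.log_re]
    exact ⟨(lt_log_iff_exp_lt hw).mpr ha, (log_lt_iff_lt_exp hw).mpr hb⟩
  · rw [mem_preimage, Complex.log_im]
    exact abs_lt.mp harg

/-- The new box lies in the part `|arg w| < h` of the annulus `exp a < |w| < exp (a + h)`,
which is the image of `box (a, h)`. -/
lemma box_subset_exp_image_box {a h H : ℝ} (hH : H ≤ rexp a * h / 2) :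
    box (rexp a, H) ⊆ Complex.exp '' box (a, h) := by
  rintro w ⟨⟨hu₁, hu₂⟩, hv₁, hv₂⟩
  have hea := exp_pos a
  have hv : |w.im| < H := abs_lt.mpr ⟨hv₁, hv₂⟩
  have hre : 0 < w.re := hea.trans hu₁
  have hnorm : rexp a < ‖w‖ := hu₁.trans_le (Complex.re_le_norm w)
  refine mem_exp_image_box hnorm ?_ ?_
  · calc ‖w‖ ≤ |w.re| + |w.im| := Complex.norm_le_abs_re_add_abs_im w
      _ < rexp a * (h + 1) := by rw [abs_of_pos hre]; nlinarith
      _ ≤ rexp (a + h) := by rw [exp_add]; gcongr; exact add_one_le_exp h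
  · have hsin := Real.mul_abs_le_abs_sin (Complex.abs_arg_le_pi_div_two_iff.mpr hre.le)
    rw [Complex.sin_arg, abs_div, abs_norm, le_div_iff₀ (hea.trans hnorm)] at hsin
    have hh : 0 < h := by nlinarith [abs_nonneg w.im]
    have hscaled : 2 / π * |Complex.arg w| < h / 2 := by
      by_contra! hle
      nlinarith
    calc |Complex.arg w| = π / 2 * (2 / π * |Complex.arg w|) := by field_simp
      _ < π / 2 * (h / 2) := by gcongr
      _ < h := by nlinarith [pi_lt_four]

lemma reProdIm_subset_exp_image_box {α : ℝ} (hα : 0 ≤ α) :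
    Ioo (-1) 1 ×ℂ Ioo (rexp α) (2 * rexp α) ⊆ Complex.exp '' box (α, π) := by
  rintro w ⟨⟨hu₁, hu₂⟩, hv₁, hv₂⟩
  have hea : 1 ≤ rexp α := one_le_exp hα
  refine mem_exp_image_box (hv₁.trans_le ((le_abs_self _).trans (Complex.abs_im_le_norm w)))
    ?_ ?_
  · have hpi : 4 * rexp α < rexp α * (π + 1) := by nlinarith [pi_gt_three]
    calc ‖w‖ ≤ |w.re| + |w.im| := Complex.norm_le_abs_re_add_abs_im w
      _ < rexp α * (π + 1) := by
        rw [abs_of_pos (show 0 < w.im by linarith)]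
        linarith [abs_lt.mpr ⟨hu₁, hu₂⟩]
      _ ≤ rexp (α + π) := by rw [exp_add]; gcongr; linarith [add_one_le_exp π]
  · exact abs_lt.mpr ⟨Complex.neg_pi_lt_arg w,
      Complex.arg_lt_pi_iff.mpr (.inr (by linarith [exp_pos α]))⟩

lemma sphDensity_exp_ge {z : ℂ} (hz : |z.re| < 1) : 1 / 900 ≤ sphDensity Complex.exp z := by
  rw [sphDensity, Complex.deriv_exp, Complex.norm_exp]
  obtain ⟨hlo, hhi⟩ := abs_lt.mp hz
  have he : rexp 1 < 3 := exp_one_lt_d9.trans (by norm_num)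
  have hup : rexp z.re < 3 := (exp_lt_exp.mpr hhi).trans he
  have hdown : 1 < 3 * rexp z.re := by
    have : rexp (-1) * rexp 1 = 1 := by rw [← exp_add]; simp
    nlinarith [exp_lt_exp.mpr hlo, exp_pos (-1)]
  have hsq_lo : 1 < 9 * rexp z.re ^ 2 := by nlinarith
  have hsq_hi : rexp z.re ^ 2 < 9 := by nlinarith [exp_pos z.re]
  rw [le_div_iff₀ (by positivity)]
  nlinarith

lemma sphArea_le_sphArea_comp_exp {g : ℂ → ℂ} (hg : Differentiable ℂ g) {p : ℝ × ℝ}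
    (hp : p.2 ≤ π) {s : Set ℂ} (hs : s ⊆ Complex.exp '' box p) :
    sphArea g s ≤ sphArea (g ∘ Complex.exp) (box p) := by
  rw [sphArea_comp Complex.differentiable_exp hg (measurableSet_box p) (injOn_exp_box hp)]
  exact sphArea_mono hg hs <|
    ((isBounded_box p).isCompact_closure.image Complex.continuous_exp).isBounded.subset
      (image_mono subset_closure)

lemma exp_div_le_sphArea_exp_iterate_two_box {α : ℝ} (hα : 0 ≤ α) :
    rexp α / 1800 ≤ sphArea (Complex.exp^[2]) (box (α, π)) := by
  set T := Ioo (-1) 1 ×ℂ Ioo (rexp α) (2 * rexp α)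
  have hT : volume.real T = 2 * rexp α := by
    rw [measureReal_def, volume_reProdIm, volume_Ioo, volume_Ioo, ENNReal.toReal_mul,
      ENNReal.toReal_ofReal (by norm_num), ENNReal.toReal_ofReal (by linarith [exp_pos α])]
    ring
  calc rexp α / 1800 ≤ 1 / 900 * volume.real T / π := by
        rw [hT, div_le_div_iff₀ (by norm_num) pi_pos]; nlinarith [pi_lt_four, exp_pos α]
    _ ≤ sphArea Complex.exp T :=
        le_sphArea_of_le_sphDensity Complex.differentiable_exp
          (measurableSet_Ioo.reProdIm measurableSet_Ioo)
          (Metric.isBounded_Ioo _ _ |>.reProdIm (Metric.isBounded_Ioo _ _))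
          fun z hz => sphDensity_exp_ge (abs_lt.mpr hz.1)
    _ ≤ sphArea (Complex.exp^[2]) (box (α, π)) :=
        sphArea_le_sphArea_comp_exp Complex.differentiable_exp le_rfl
          (reProdIm_subset_exp_image_box hα)

/-- The height of the next box is capped at `π`, so that `exp` stays injective on every box. -/
noncomputable def boxStep (p : ℝ × ℝ) : ℝ × ℝ := (rexp p.1, min (rexp p.1 * p.2 / 2) π)

lemma iterate_boxStep_snd_le_pi {p : ℝ × ℝ} (hp : p.2 ≤ π) :
    ∀ n : ℕ, (boxStep^[n] p).2 ≤ π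
  | 0 => hp
  | n + 1 => by rw [Function.iterate_succ_apply']; exact min_le_right _ _

lemma iterate_boxStep_snd_pos {p : ℝ × ℝ} (hp : 0 < p.2) : ∀ n : ℕ, 0 < (boxStep^[n] p).2
  | 0 => hp
  | n + 1 => by
    rw [Function.iterate_succ_apply']
    have := iterate_boxStep_snd_pos hp n
    exact lt_min (by positivity) pi_pos

lemma add_le_iterate_boxStep_fst (p : ℝ × ℝ) : ∀ n : ℕ, p.1 + n ≤ (boxStep^[n] p).1
  | 0 => by simp
  | n + 1 => by
    rw [Function.iterate_succ_apply', Nat.cast_succ, ← add_assoc]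
    exact (add_le_add_left (add_le_iterate_boxStep_fst p n) 1).trans (add_one_le_exp _)

lemma min_two_mul_le_boxStep_snd {p : ℝ × ℝ} (hp₁ : 3 ≤ p.1) (hp₂ : 0 ≤ p.2) :
    min (2 * p.2) π ≤ (boxStep p).2 :=
  min_le_min_right _ (by nlinarith [add_one_le_exp p.1])

/-- Once the boxes are far enough to the right, `exp` at least doubles their height until it
reaches the cap `π`. -/
lemma eventually_iterate_boxStep_snd_eq_pi {p : ℝ × ℝ} (hp : 0 < p.2) (hpπ : p.2 ≤ π) :
    ∀ᶠ n in atTop, (boxStep^[n] p).2 = π := by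
  obtain ⟨K, hK⟩ := exists_nat_ge (3 - p.1)
  set q := boxStep^[K] p
  have hq : 0 < q.2 := iterate_boxStep_snd_pos hp K
  have hgrow (j : ℕ) : min (2 ^ j * q.2) π ≤ (boxStep^[j] q).2 := by
    induction j with
    | zero => simp
    | succ j ih =>
      rw [Function.iterate_succ_apply']
      refine le_trans ?_ (min_two_mul_le_boxStep_snd ?_ (iterate_boxStep_snd_pos hq j).le)
      · rw [pow_succ', mul_assoc]
        refine le_min ?_ (min_le_right _ _)
        calc min (2 * (2 ^ j * q.2)) π ≤ 2 * min (2 ^ j * q.2) π := by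
              rw [mul_min_of_nonneg _ _ zero_le_two]
              exact min_le_min_left _ (by linarith [pi_pos])
          _ ≤ 2 * (boxStep^[j] q).2 := by gcongr
      · linarith [add_le_iterate_boxStep_fst q j, add_le_iterate_boxStep_fst p K,
          (Nat.cast_nonneg j : (0 : ℝ) ≤ j)]
  obtain ⟨j₀, hj₀⟩ := pow_unbounded_of_one_lt (π / q.2) one_lt_two
  filter_upwards [eventually_ge_atTop (j₀ + K)] with n hn
  obtain ⟨j, rfl⟩ := Nat.exists_eq_add_of_le' (show K ≤ n by omega)
  rw [Function.iterate_add_apply]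
  refine le_antisymm (iterate_boxStep_snd_le_pi (iterate_boxStep_snd_le_pi hpπ K) j) ?_
  have : π ≤ 2 ^ j * q.2 := by
    rw [div_lt_iff₀ hq] at hj₀
    nlinarith [pow_le_pow_right₀ (one_le_two : (1 : ℝ) ≤ 2) (show j₀ ≤ j by omega)]
  simpa [min_eq_right this] using hgrow j

lemma sphArea_iterate_box_le {p : ℝ × ℝ} (hp : p.2 ≤ π) (m k : ℕ) :
    sphArea Complex.exp^[m] (box (boxStep^[k] p)) ≤ sphArea Complex.exp^[m + k] (box p) := by
  induction k generalizing m with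
  | zero => rfl
  | succ k ih =>
    calc _ ≤ sphArea (Complex.exp^[m] ∘ Complex.exp) (box (boxStep^[k] p)) := by
          rw [Function.iterate_succ_apply']
          exact sphArea_le_sphArea_comp_exp (Complex.differentiable_exp.iterate m)
            (iterate_boxStep_snd_le_pi hp k) (box_subset_exp_image_box (min_le_left _ _))
      _ ≤ sphArea Complex.exp^[m + (k + 1)] (box p) := by
          rw [← Function.iterate_succ, ← add_assoc, add_right_comm]
          exact ih (m + 1)

lemma box_subset_ball (x : ℝ) {r h : ℝ} (hh : h ≤ r / 2) :
    box (x, h) ⊆ Metric.ball (x : ℂ) r := by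
  rintro z ⟨⟨h₁, h₂⟩, h₃, h₄⟩
  rw [Metric.mem_ball, Complex.dist_eq]
  calc ‖z - x‖ ≤ |(z - x).re| + |(z - x).im| := Complex.norm_le_abs_re_add_abs_im _
    _ < r := by
      simp only [Complex.sub_re, Complex.ofReal_re, Complex.sub_im, Complex.ofReal_im, sub_zero]
      simp only at h₁ h₂ h₃ h₄
      linarith [abs_lt.mpr (⟨by linarith, by linarith⟩ : -h < z.re - x ∧ z.re - x < h),
        abs_lt.mpr (⟨h₃, h₄⟩ : -h < z.im ∧ z.im < h)]

lemma eventually_exp_sub_le_log_sphArea (x : ℝ) {r : ℝ} (hr : 0 < r) :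
    ∀ᶠ n : ℕ in atTop, rexp (n + (x - 3)) - log 1800
      ≤ log (sphArea Complex.exp^[n] (Metric.ball (x : ℂ) r)) := by
  set p : ℝ × ℝ := (x, min (r / 2) π)
  have hpπ : p.2 ≤ π := min_le_right _ _
  obtain ⟨N, hN⟩ := eventually_atTop.mp
    (eventually_iterate_boxStep_snd_eq_pi (lt_min (half_pos hr) pi_pos) hpπ)
  filter_upwards [eventually_ge_atTop (N + 3)] with n hn
  obtain ⟨k, rfl⟩ : ∃ k, n = k + 3 := ⟨n - 3, by omega⟩
  set q := boxStep^[k + 1] p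
  have hq : q = (q.1, π) := Prod.ext rfl (hN _ (by omega))
  have hq₁ : rexp (x + k) ≤ q.1 := by
    rw [show q = boxStep (boxStep^[k] p) from Function.iterate_succ_apply' _ _ _]
    exact exp_le_exp.mpr (add_le_iterate_boxStep_fst p k)
  have hS : rexp q.1 / 1800 ≤ sphArea Complex.exp^[k + 3] (Metric.ball (x : ℂ) r) :=
    calc rexp q.1 / 1800 ≤ sphArea Complex.exp^[2] (box q) := by
          rw [hq]; exact exp_div_le_sphArea_exp_iterate_two_box (hq₁.trans' (exp_pos _).le)
      _ ≤ sphArea Complex.exp^[2 + (k + 1)] (box p) := sphArea_iterate_box_le hpπ 2 (k + 1)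
      _ ≤ _ := by
          rw [show 2 + (k + 1) = k + 3 by omega]
          exact sphArea_mono (Complex.differentiable_exp.iterate _)
            (box_subset_ball x (min_le_left _ _)) Metric.isBounded_ball
  calc rexp ((k + 3 : ℕ) + (x - 3)) - log 1800 ≤ q.1 - log 1800 := by
        push_cast; convert sub_le_sub_right hq₁ _ using 3; ring
    _ = log (rexp q.1 / 1800) := by rw [log_div (exp_pos _).ne' (by norm_num), log_exp]
    _ ≤ _ := log_le_log (by positivity) hS

lemma tendsto_exp_add_sub_div_atTop (c C : ℝ) :
    Tendsto (fun n : ℕ => (rexp (n + c) - C) / n) atTop atTop := by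
  have h := (((tendsto_exp_div_pow_atTop 1).comp tendsto_natCast_atTop_atTop).const_mul_atTop
    (exp_pos c)).atTop_add (tendsto_const_div_atTop_nhds_zero_nat (-C))
  refine h.congr fun n => ?_
  simp only [Function.comp_apply, pow_one, exp_add]
  ring

end SphericalArea

theorem stmt_3 (x : ℝ) (r : ℝ) (hr : 0 < r) :
    Tendsto
      (fun n : ℕ =>
        (1 / (n : ℝ)) * Real.log (sphArea (Complex.exp^[n]) (Metric.ball (x : ℂ) r)))
      atTop atTop := by
  refine tendsto_atTop_mono' _ ?_ (SphericalArea.tendsto_exp_add_sub_div_atTop (x - 3) (log 1800))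
  filter_upwards [SphericalArea.eventually_exp_sub_le_log_sphArea x hr] with n hn
  rw [one_div_mul_eq_div]
  exact div_le_div_of_nonneg_right hn n.cast_nonneg
end

section
/- Let z₀ > 0 be a real number and let 0 < r < z₀/4. Then for every n ≥ 1, the supremum of |exp^n(w)| over the closed disk {w ∈ ℂ : |w − z₀| ≤ r} equals exp^n(z₀ + r), the n-th iterate of the (real) exponential function evaluated at z₀ + r. -/
/-!
For real `x` the iterates of the complex exponential are those of the real one, and
`‖exp z‖ = exp (re z) ≤ exp ‖z‖` gives `‖exp^[n] w‖ ≤ exp^[n] ‖w‖`. On the disk of radius `r`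
about `z₀ > 0` we have `‖w‖ ≤ z₀ + r` with equality at the real point `z₀ + r`, so by
monotonicity of `exp^[n]` the supremum is attained there.
-/

theorem Complex.exp_iterate_ofReal (n : ℕ) (x : ℝ) :
    Complex.exp^[n] (x : ℂ) = (Real.exp^[n] x : ℂ) := by
  induction n with
  | zero => rfl
  | succ n ih =>
    rw [Function.iterate_succ_apply', Function.iterate_succ_apply', ih, Complex.ofReal_exp]

theorem Complex.norm_exp_iterate_le (n : ℕ) (w : ℂ) :
    ‖Complex.exp^[n] w‖ ≤ Real.exp^[n] ‖w‖ := by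
  induction n with
  | zero => rfl
  | succ n ih =>
    rw [Function.iterate_succ_apply', Function.iterate_succ_apply', Complex.norm_exp]
    exact Real.exp_le_exp.mpr ((Complex.re_le_norm _).trans ih)

theorem Real.exp_iterate_nonneg (n : ℕ) {x : ℝ} (hx : 0 ≤ x) : 0 ≤ Real.exp^[n] x := by
  cases n with
  | zero => exact hx
  | succ n =>
    rw [Function.iterate_succ_apply']
    positivity

theorem Complex.isGreatest_norm_exp_iterate_closedBall (n : ℕ) {c r : ℝ} (hc : 0 ≤ c)
    (hr : 0 ≤ r) :
    IsGreatest ((fun w : ℂ => ‖Complex.exp^[n] w‖) '' Metric.closedBall (c : ℂ) r)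
      (Real.exp^[n] (c + r)) := by
  constructor
  · refine ⟨((c + r : ℝ) : ℂ), ?_, ?_⟩
    · rw [Metric.mem_closedBall, Complex.dist_eq, Complex.ofReal_add, add_sub_cancel_left,
        Complex.norm_real, Real.norm_of_nonneg hr]
    · dsimp only
      rw [Complex.exp_iterate_ofReal, Complex.norm_real,
        Real.norm_of_nonneg (Real.exp_iterate_nonneg n (by linarith))]
  · rintro _ ⟨w, hw, rfl⟩
    have hw_norm : ‖w‖ ≤ c + r := by
      simpa [Complex.norm_real, Real.norm_of_nonneg hc] using norm_le_of_mem_closedBall hw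
    exact (Complex.norm_exp_iterate_le n w).trans (Real.exp_monotone.iterate n hw_norm)

theorem stmt_4_general (z₀ : ℝ) (hz₀ : 0 < z₀) (r : ℝ) (hr : 0 < r)
    (n : ℕ) :
    sSup ((fun w : ℂ => ‖Complex.exp^[n] w‖) '' Metric.closedBall (z₀ : ℂ) r)
      = Real.exp^[n] (z₀ + r) :=
  (Complex.isGreatest_norm_exp_iterate_closedBall n hz₀.le hr.le).csSup_eq

theorem stmt_4 (z₀ : ℝ) (hz₀ : 0 < z₀) (r : ℝ) (hr : 0 < r) (hr' : r < z₀ / 4)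
    (n : ℕ) (hn : 1 ≤ n) :
    sSup ((fun w : ℂ => ‖Complex.exp^[n] w‖) '' Metric.closedBall (z₀ : ℂ) r)
      = Real.exp^[n] (z₀ + r) :=
  stmt_4_general z₀ hz₀ r hr n
end

section
/- Let f be a transcendental entire function. There exists R(f) > 0 such that for any two points z₀, z₁ ∈ ℂ with |z₁| > |z₀| ≥ R(f), one has (1/n) · log log ( M^n(|z₁|,f) / M^n(|z₀|,f) ) → +∞ as n → ∞. -/
/-!
Since `f` is not a polynomial, it has nonzero Taylor coefficients of arbitrarily high order, so
Cauchy's estimates give `M(r) ≥ r ^ k` for large `r`, for every `k`. By Hadamard's three circles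
theorem `x ↦ log M(eˣ)` is convex, so its secant slopes increase; together with the growth
this gives `log M(t) - log M(s) ≥ k (log t - log s)` for all `t > s ≥ R_k`. Along the orbits
`s_n = Mⁿ(|z₀|) < t_n = Mⁿ(|z₁|)`, which tend to infinity, the gap `log (t_n / s_n)` is thus
eventually multiplied by at least `k` at each step, so `(1/n) log log (t_n / s_n)` is eventually
at least `log k - 1`, for every `k`.
-/

open Filter

/-- The maximum modulus `M(r, f) = max_{|z| = r} |f z|`. -/
noncomputable def maxMod (f : ℂ → ℂ) (r : ℝ) : ℝ :=
  sSup ((fun z => ‖f z‖) '' Metric.sphere (0 : ℂ) r)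

open Set Real

theorem StrictMonoOn.iterate {α : Type*} [Preorder α] {g : α → α} {s : Set α}
    (hg : StrictMonoOn g s) (hs : MapsTo g s s) (n : ℕ) : StrictMonoOn g^[n] s := by
  induction n with
  | zero => exact strictMonoOn_id
  | succ n ih =>
    rw [Function.iterate_succ']
    exact hg.comp ih (hs.iterate n)

theorem tendsto_iterate_atTop_of_add_one_le {g : ℝ → ℝ} {R s : ℝ}
    (hg : ∀ r ≥ R, r + 1 ≤ g r) (hs : R ≤ s) : Tendsto (fun n => g^[n] s) atTop atTop := by
  have hlin : ∀ n : ℕ, s + n ≤ g^[n] s := by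
    intro n
    induction n with
    | zero => simp
    | succ n ih =>
      rw [Function.iterate_succ_apply', Nat.cast_succ, ← add_assoc]
      have : R ≤ g^[n] s := by linarith [n.cast_nonneg (α := ℝ)]
      linarith [hg _ this]
  exact tendsto_atTop_mono hlin (tendsto_atTop_add_const_left _ s tendsto_natCast_atTop_atTop)

theorem ConvexOn.mul_sub_le_sub_of_mul_sub_le_sub {φ : ℝ → ℝ} {α σ τ k : ℝ}
    (hφ : ConvexOn ℝ (Ici α) φ) (hασ : α < σ) (hστ : σ < τ) (hτ : k * (τ - α) ≤ φ τ - φ α) :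
    k * (τ - σ) ≤ φ τ - φ σ := by
  have hsecant := hφ.secant_mono_aux3 self_mem_Ici (mem_Ici.2 (hασ.trans hστ).le) hασ hστ
  have hslope : k ≤ (φ τ - φ α) / (τ - α) := by
    rwa [le_div_iff₀ (by linarith)]
  rw [← le_div_iff₀ (sub_pos.2 hστ)]
  exact hslope.trans hsecant

theorem tendsto_one_div_mul_log_atTop_of_eventually_mul_le {u : ℕ → ℝ}
    (hu : ∀ᶠ n in atTop, 0 < u n) (h : ∀ k : ℕ, ∀ᶠ n in atTop, k * u n ≤ u (n + 1)) :
    Tendsto (fun n : ℕ => (1 / (n : ℝ)) * log (u n)) atTop atTop := by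
  refine tendsto_atTop.2 fun b => ?_
  obtain ⟨k, hk⟩ := exists_nat_ge (exp (b + 1))
  have hk0 : (0 : ℝ) < k := (exp_pos _).trans_le hk
  obtain ⟨N, hN⟩ := eventually_atTop.1 (hu.and (h k))
  set c := u N / (k : ℝ) ^ N
  have hc : 0 < c := div_pos (hN N le_rfl).1 (pow_pos hk0 N)
  have hgeom : ∀ n ≥ N, c * (k : ℝ) ^ n ≤ u n := by
    intro n hn
    induction n, hn using Nat.le_induction with
    | base => exact (div_mul_cancel₀ _ (pow_pos hk0 N).ne').le
    | succ n hn ih =>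
      calc c * (k : ℝ) ^ (n + 1) = k * (c * (k : ℝ) ^ n) := by ring
        _ ≤ k * u n := mul_le_mul_of_nonneg_left ih hk0.le
        _ ≤ u (n + 1) := (hN n hn).2
  have hsmall : ∀ᶠ n : ℕ in atTop, -1 ≤ log c / n :=
    (tendsto_const_div_atTop_nhds_zero_nat (log c)).eventually (le_mem_nhds (by norm_num))
  filter_upwards [hsmall, eventually_ge_atTop N, eventually_gt_atTop 0] with n hsmall hN hn
  have hn' : (0 : ℝ) < n := Nat.cast_pos.2 hn
  have hlog : log c + n * log k ≤ log (u n) := by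
    rw [← log_pow, ← log_mul hc.ne' (pow_pos hk0 n).ne']
    exact log_le_log (by positivity) (hgeom n hN)
  have hlogk : b + 1 ≤ log k := by rwa [le_log_iff_exp_le hk0]
  calc b ≤ log c / n + log k := by linarith
    _ = 1 / n * (log c + n * log k) := by field_simp
    _ ≤ 1 / n * log (u n) := by gcongr

section MaxMod

variable {f : ℂ → ℂ}

theorem maxMod_nonneg (r : ℝ) : 0 ≤ maxMod f r :=
  Real.sSup_nonneg (by rintro _ ⟨z, -, rfl⟩; exact norm_nonneg _)

theorem norm_le_maxMod (hf : Continuous f) {z : ℂ} {r : ℝ} (hz : ‖z‖ = r) :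
    ‖f z‖ ≤ maxMod f r :=
  le_csSup ((isCompact_sphere 0 r).image (continuous_norm.comp hf)).bddAbove
    ⟨z, by simpa using hz, rfl⟩

theorem maxMod_le {r C : ℝ} (hC : 0 ≤ C) (h : ∀ z : ℂ, ‖z‖ = r → ‖f z‖ ≤ C) :
    maxMod f r ≤ C :=
  Real.sSup_le (by rintro _ ⟨z, hz, rfl⟩; exact h z (by simpa using hz)) hC

theorem norm_iteratedDeriv_div_factorial_mul_pow_le_maxMod (hf : Differentiable ℂ f) (m : ℕ)
    {r : ℝ} (hr : 0 < r) : ‖iteratedDeriv m f 0‖ / m.factorial * r ^ m ≤ maxMod f r := by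
  have hcauchy := Complex.norm_iteratedDeriv_le_of_forall_mem_sphere_norm_le (c := 0) m hr
    hf.diffContOnCl fun z hz => norm_le_maxMod hf.continuous (by simpa using hz)
  rw [div_mul_eq_mul_div, div_le_iff₀ (by positivity), mul_comm (maxMod f r)]
  rwa [le_div_iff₀ (by positivity)] at hcauchy

theorem exists_iteratedDeriv_ne_zero (hf : Differentiable ℂ f)
    (htrans : ¬ ∃ p : Polynomial ℂ, ∀ z, f z = p.eval z) (k : ℕ) :
    ∃ m, k ≤ m ∧ iteratedDeriv m f 0 ≠ 0 := by
  by_contra! hzero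
  refine htrans ⟨∑ m ∈ Finset.range k,
    Polynomial.C ((m.factorial : ℂ)⁻¹ * iteratedDeriv m f 0) * Polynomial.X ^ m, fun z => ?_⟩
  rw [← Complex.taylorSeries_eq_of_entire' 0 z hf, tsum_eq_sum (s := Finset.range k)]
  · simp [Polynomial.eval_finsetSum]
  · intro m hm
    rw [hzero m (by simpa using hm), mul_zero, zero_mul]

theorem eventually_pow_le_maxMod (hf : Differentiable ℂ f)
    (htrans : ¬ ∃ p : Polynomial ℂ, ∀ z, f z = p.eval z) (k : ℕ) :
    ∀ᶠ r in atTop, r ^ k ≤ maxMod f r := by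
  obtain ⟨m, hkm, hm⟩ := exists_iteratedDeriv_ne_zero hf htrans (k + 1)
  set c := ‖iteratedDeriv m f 0‖ / m.factorial
  have hc : 0 < c := by positivity
  filter_upwards [eventually_ge_atTop 1, eventually_ge_atTop c⁻¹] with r hr1 hrc
  calc r ^ k ≤ c * r * r ^ k := by
        refine le_mul_of_one_le_left (by positivity) ?_
        rwa [← inv_le_iff_one_le_mul₀' hc]
    _ = c * r ^ (k + 1) := by ring
    _ ≤ c * r ^ m := by gcongr
    _ ≤ maxMod f r := norm_iteratedDeriv_div_factorial_mul_pow_le_maxMod hf m (by linarith)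

/-- Hadamard's three circles theorem, from the three lines theorem for `f ∘ exp`. -/
theorem maxMod_exp_le (hf : Differentiable ℂ f) {x y a b : ℝ} (hxy : x < y) (ha : 0 ≤ a)
    (hb : 0 ≤ b) (hab : a + b = 1) :
    maxMod f (exp (a * x + b * y)) ≤ maxMod f (exp x) ^ a * maxMod f (exp y) ^ b := by
  set G : ℂ → ℂ := fun z => f (Complex.exp z)
  have hG : Differentiable ℂ G := hf.comp Complex.differentiable_exp
  have hbdd : BddAbove ((norm ∘ G) '' Complex.HadamardThreeLines.verticalClosedStrip x y) := by
    refine ((isCompact_closedBall (0 : ℂ) (exp y)).image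
      (continuous_norm.comp hf.continuous)).bddAbove.mono ?_
    rintro _ ⟨z, hz, rfl⟩
    exact ⟨Complex.exp z, by simpa [Complex.norm_exp] using hz.2, rfl⟩
  have hside (u : ℝ) : ∀ z ∈ Complex.re ⁻¹' {u}, ‖G z‖ ≤ maxMod f (exp u) := fun z hz =>
    norm_le_maxMod hf.continuous (by simp_all [Complex.norm_exp])
  refine maxMod_le (mul_nonneg (rpow_nonneg (maxMod_nonneg _) _)
    (rpow_nonneg (maxMod_nonneg _) _)) fun w hw => ?_
  have hw0 : w ≠ 0 := by
    rintro rfl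
    exact (exp_pos _).ne (by simpa using hw)
  obtain rfl : a = 1 - b := by linarith
  have hre : (Complex.log w).re = x + b * (y - x) := by
    rw [Complex.log_re, hw, log_exp]
    ring
  have hθ : ((Complex.log w).re - x) / (y - x) = b := by
    rw [hre, add_sub_cancel_left, mul_div_cancel_right₀ _ (sub_ne_zero.2 hxy.ne')]
  have hmem : Complex.log w ∈ Complex.HadamardThreeLines.verticalClosedStrip x y := by
    rw [Complex.HadamardThreeLines.verticalClosedStrip, mem_preimage, hre]
    constructor <;> nlinarith
  have := Complex.HadamardThreeLines.norm_le_interp_of_mem_verticalClosedStrip' hxy hmem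
    hG.diffContOnCl hbdd (hside x) (hside y)
  rwa [hθ, show G (Complex.log w) = f w from congrArg f (Complex.exp_log hw0)] at this

theorem convexOn_log_maxMod_exp (hf : Differentiable ℂ f) {x₀ : ℝ}
    (hpos : ∀ x ≥ x₀, 0 < maxMod f (exp x)) :
    ConvexOn ℝ (Ici x₀) (fun x => log (maxMod f (exp x))) := by
  refine convexOn_iff_pairwise_pos.2 ⟨convex_Ici x₀, ?_⟩
  intro x hx y hy hxy a b ha hb hab
  wlog hlt : x < y generalizing x y a b
  · have := this hy hx hxy.symm hb ha (by linarith) (lt_of_le_of_ne (not_lt.1 hlt) hxy.symm)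
    simpa only [add_comm] using this
  have hmem : a * x + b * y ∈ Ici x₀ := convex_Ici x₀ hx hy ha.le hb.le hab
  have hMx := hpos x hx
  have hMy := hpos y hy
  simp only [smul_eq_mul]
  calc log (maxMod f (exp (a * x + b * y)))
      ≤ log (maxMod f (exp x) ^ a * maxMod f (exp y) ^ b) :=
        log_le_log (hpos _ hmem) (maxMod_exp_le hf hlt ha.le hb.le hab)
    _ = a * log (maxMod f (exp x)) + b * log (maxMod f (exp y)) := by
        rw [log_mul (rpow_pos_of_pos hMx a).ne' (rpow_pos_of_pos hMy b).ne', log_rpow hMx,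
          log_rpow hMy]

theorem eventually_mul_log_sub_le_log_maxMod_sub (hf : Differentiable ℂ f)
    (htrans : ¬ ∃ p : Polynomial ℂ, ∀ z, f z = p.eval z) (k : ℕ) :
    ∀ᶠ s in atTop, ∀ t, s < t → k * (log t - log s) ≤ log (maxMod f t) - log (maxMod f s) := by
  obtain ⟨R, hR⟩ := eventually_atTop.1
    ((eventually_ge_atTop 1).and (eventually_pow_le_maxMod hf htrans 0))
  have hR1 : 1 ≤ R := (hR R le_rfl).1
  have hM1 (r : ℝ) (hr : R ≤ r) : 1 ≤ maxMod f r := by simpa using (hR r hr).2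
  set φ : ℝ → ℝ := fun x => log (maxMod f (exp x))
  have hφ (r : ℝ) (hr : 0 < r) : φ (log r) = log (maxMod f r) := by simp only [φ, exp_log hr]
  have hconv : ConvexOn ℝ (Ici (log R)) φ := convexOn_log_maxMod_exp hf fun x hx =>
    one_pos.trans_le (hM1 _ ((log_le_iff_le_exp (by linarith)).1 hx))
  filter_upwards [eventually_gt_atTop R, eventually_ge_atTop (exp (φ (log R))),
    eventually_forall_ge_atTop.2 (eventually_pow_le_maxMod hf htrans (k + 1))]
    with s hRs hφs hgrowth t hst
  have hs0 : 0 < s := by linarith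
  have ht0 : 0 < t := by linarith
  rw [← hφ s hs0, ← hφ t ht0]
  refine hconv.mul_sub_le_sub_of_mul_sub_le_sub (log_lt_log (by linarith) hRs)
    (log_lt_log hs0 hst) ?_
  have hφt : (k + 1) * log t ≤ φ (log t) := by
    rw [hφ t ht0, ← Nat.cast_succ, ← log_pow]
    exact log_le_log (pow_pos ht0 _) (hgrowth t hst.le)
  have hφR : φ (log R) ≤ log t := by
    rw [le_log_iff_exp_le ht0]
    linarith
  have hkR : 0 ≤ (k : ℝ) * log R := mul_nonneg k.cast_nonneg (log_nonneg hR1)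
  linarith

theorem eventually_add_one_le_maxMod (hf : Differentiable ℂ f)
    (htrans : ¬ ∃ p : Polynomial ℂ, ∀ z, f z = p.eval z) :
    ∀ᶠ r in atTop, r + 1 ≤ maxMod f r := by
  filter_upwards [eventually_ge_atTop 2, eventually_pow_le_maxMod hf htrans 2] with r hr hM
  nlinarith

theorem eventually_forall_lt_maxMod_lt_maxMod (hf : Differentiable ℂ f)
    (htrans : ¬ ∃ p : Polynomial ℂ, ∀ z, f z = p.eval z) :
    ∀ᶠ r in atTop, ∀ t, r < t → maxMod f r < maxMod f t := by
  filter_upwards [eventually_gt_atTop 0, eventually_mul_log_sub_le_log_maxMod_sub hf htrans 1,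
    eventually_forall_ge_atTop.2 (eventually_pow_le_maxMod hf htrans 0)] with r hr hslope hM t hrt
  have hMpos (u : ℝ) (hu : r ≤ u) : 0 < maxMod f u := one_pos.trans_le (by simpa using hM u hu)
  have hlog := log_lt_log hr hrt
  have hgap := hslope t hrt
  rw [Nat.cast_one, one_mul] at hgap
  exact (log_lt_log_iff (hMpos r le_rfl) (hMpos t hrt.le)).1 (by linarith)

end MaxMod

theorem stmt_6 (f : ℂ → ℂ) (hf : Differentiable ℂ f)
    (htrans : ¬ ∃ p : Polynomial ℂ, ∀ z, f z = p.eval z) :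
    ∃ R > 0, ∀ z₀ z₁ : ℂ, R ≤ ‖z₀‖ → ‖z₀‖ < ‖z₁‖ →
      Tendsto
        (fun n : ℕ =>
          (1 / (n : ℝ)) *
            Real.log (Real.log ((maxMod f)^[n] ‖z₁‖ / (maxMod f)^[n] ‖z₀‖)))
        atTop atTop := by
  obtain ⟨R, hR⟩ := eventually_atTop.1 <| (eventually_gt_atTop 0).and <|
    (eventually_add_one_le_maxMod hf htrans).and (eventually_forall_lt_maxMod_lt_maxMod hf htrans)
  have hR0 : 0 < R := (hR R le_rfl).1
  have hstep (r : ℝ) (hr : R ≤ r) : r + 1 ≤ maxMod f r := (hR r hr).2.1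
  have hmaps : MapsTo (maxMod f) (Ici R) (Ici R) := fun r hr =>
    mem_Ici.2 (by linarith [hstep r hr, mem_Ici.1 hr])
  have hstrict : StrictMonoOn (maxMod f) (Ici R) := fun r hr _ _ hrt => (hR r hr).2.2 _ hrt
  refine ⟨R, hR0, fun z₀ z₁ hz₀ hz₀₁ => ?_⟩
  have hlt (n : ℕ) : (maxMod f)^[n] ‖z₀‖ < (maxMod f)^[n] ‖z₁‖ :=
    hstrict.iterate hmaps n hz₀ (hz₀.trans hz₀₁.le) hz₀₁
  have hpos (n : ℕ) : 0 < (maxMod f)^[n] ‖z₀‖ := by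
    linarith [mem_Ici.1 (hmaps.iterate n hz₀)]
  have htpos (n : ℕ) : 0 < (maxMod f)^[n] ‖z₁‖ := (hpos n).trans (hlt n)
  refine tendsto_one_div_mul_log_atTop_of_eventually_mul_le
    (Eventually.of_forall fun n => log_pos ((one_lt_div (hpos n)).2 (hlt n))) fun k => ?_
  filter_upwards [(tendsto_iterate_atTop_of_add_one_le hstep hz₀).eventually
    (eventually_mul_log_sub_le_log_maxMod_sub hf htrans k)] with n hn
  rw [log_div (htpos _).ne' (hpos _).ne', log_div (htpos _).ne' (hpos _).ne',
    Function.iterate_succ_apply', Function.iterate_succ_apply']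
  exact hn _ (hlt n)
end
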